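/- arXiv:2309.15401 — 9 statements merged into one kernel-verified Lean document; each statement's English description precedes it below -/
import Mathlib

section
/- Suppose (A2) holds. Then the vector field F is locally Lipschitz continuous on ℝⁿ (in particular, continuous), even though its defining formula contains the factor 1/‖∇h(θ)‖². -/
/-!
Away from the critical points of `h` the factor `1 / ‖∇h‖²` is harmless: near a point with
`∇h ≠ 0`, `F` agrees with the field obtained by replacing `‖∇h‖²` by `max ‖∇h‖² b` for a small
`b > 0`, which is a composition of locally Lipschitz maps. At a critical point of `h`, (A2) forces
`h > 0`, so `∇J ⋅ ∇h - c h < 0` nearby and `F = -∇J` on a whole neighbourhood.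
-/

open scoped RealInnerProductSpace
open Set Filter Topology

open Classical in
/-- The safe-gradient-flow vector field `F`. -/
noncomputable def Fvec {n : ℕ} (J h : EuclideanSpace ℝ (Fin n) → ℝ) (c : ℝ)
    (θ : EuclideanSpace ℝ (Fin n)) : EuclideanSpace ℝ (Fin n) :=
  if gradient h θ = 0 then -gradient J θ
  else -gradient J θ +
    (max (⟪gradient J θ, gradient h θ⟫ - c * h θ) 0 / ‖gradient h θ‖ ^ 2) • gradient h θ

lemma LocallyLipschitz.of_eventuallyEq {α β : Type*} [PseudoEMetricSpace α]
    [PseudoEMetricSpace β] {f : α → β}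
    (H : ∀ x, ∃ g : α → β, LocallyLipschitz g ∧ f =ᶠ[𝓝 x] g) : LocallyLipschitz f := by
  intro x
  obtain ⟨g, hg, hfg⟩ := H x
  obtain ⟨K, t, ht, hK⟩ := hg x
  refine ⟨K, t ∩ {y | f y = g y}, inter_mem ht hfg, fun y hy z hz => ?_⟩
  rw [hy.2, hz.2]
  exact hK hy.1 hz.1

section Operations

variable {α E : Type*} [PseudoMetricSpace α] [NormedAddCommGroup E]

lemma LocallyLipschitz.smul [NormedSpace ℝ E] {f : α → ℝ} {g : α → E}
    (hf : LocallyLipschitz f) (hg : LocallyLipschitz g) : LocallyLipschitz fun x => f x • g x :=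
  (contDiff_fst.smul contDiff_snd : ContDiff ℝ 1 fun p : ℝ × E => p.1 • p.2).locallyLipschitz.comp
    (hf.prodMk hg)

lemma LocallyLipschitz.inner [InnerProductSpace ℝ E] {f g : α → E}
    (hf : LocallyLipschitz f) (hg : LocallyLipschitz g) : LocallyLipschitz fun x => ⟪f x, g x⟫ :=
  (ContDiff.inner ℝ contDiff_fst contDiff_snd : ContDiff ℝ 1 fun p : E × E => ⟪p.1, p.2⟫)
    |>.locallyLipschitz.comp (hf.prodMk hg)

end Operations

lemma lipschitzWith_inv_max_const {b : ℝ} (hb : 0 < b) :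
    LipschitzWith (b ^ 2)⁻¹.toNNReal fun s : ℝ => (max s b)⁻¹ := by
  refine LipschitzWith.of_dist_le_mul fun s t => ?_
  have hs : b ≤ max s b := le_max_right s b
  have ht : b ≤ max t b := le_max_right t b
  rw [dist_inv_inv₀ (by positivity) (by positivity), Real.coe_toNNReal _ (by positivity),
    Real.norm_of_nonneg (by positivity), Real.norm_of_nonneg (by positivity)]
  calc dist (max s b) (max t b) / (max s b * max t b)
      ≤ dist s t / b ^ 2 := by
        gcongr
        · exact abs_max_sub_max_le_abs s t b
        · rw [sq]; gcongr
    _ = (b ^ 2)⁻¹ * dist s t := div_eq_inv_mul _ _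

section SafeGradientFlow

variable {E : Type*} [NormedAddCommGroup E] [InnerProductSpace ℝ E] [CompleteSpace E]
  {J h : E → ℝ} {c : ℝ}

lemma pos_of_gradient_eq_zero
    (hA2 : ∀ ρ ∈ range h, ρ ≤ 0 → ∃ L > 0, ∀ θ, h θ ≤ 0 → ρ ≤ h θ → L < ‖gradient h θ‖)
    {x : E} (hx : gradient h x = 0) : 0 < h x := by
  by_contra! hle
  obtain ⟨L, hL, hgrad⟩ := hA2 (h x) ⟨x, rfl⟩ hle
  have := hgrad x hle le_rfl
  rw [hx, norm_zero] at this
  linarith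

lemma locallyLipschitz_max_inner_gradient_sub (hJ' : LocallyLipschitz (gradient J))
    (hh : ContDiff ℝ 1 h) (hh' : LocallyLipschitz (gradient h)) :
    LocallyLipschitz fun θ => max (⟪gradient J θ, gradient h θ⟫ - c * h θ) 0 :=
  ((hJ'.inner hh').sub (contDiff_const.mul hh).locallyLipschitz).max_const 0

end SafeGradientFlow

section Fvec

variable {n : ℕ} {J h : EuclideanSpace ℝ (Fin n) → ℝ} {c : ℝ} {θ : EuclideanSpace ℝ (Fin n)}

lemma Fvec_eq_neg_gradient (hθ : ⟪gradient J θ, gradient h θ⟫ - c * h θ ≤ 0) :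
    Fvec J h c θ = -gradient J θ := by
  by_cases hg : gradient h θ = 0
  · rw [Fvec, if_pos hg]
  · rw [Fvec, if_neg hg, max_eq_right hθ, zero_div, zero_smul, add_zero]

lemma Fvec_eq_of_le_norm_sq {b : ℝ} (hb : 0 < b) (hθ : b ≤ ‖gradient h θ‖ ^ 2) :
    Fvec J h c θ = -gradient J θ + (max (‖gradient h θ‖ ^ 2) b)⁻¹ •
      max (⟪gradient J θ, gradient h θ⟫ - c * h θ) 0 • gradient h θ := by
  have hg : gradient h θ ≠ 0 := by
    rintro hg
    have : b ≤ 0 := by simpa [hg] using hθ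
    linarith
  rw [Fvec, if_neg hg, max_eq_left hθ, smul_smul, div_eq_inv_mul]

end Fvec

theorem stmt1_general {n : ℕ} (J h : EuclideanSpace ℝ (Fin n) → ℝ) (c : ℝ) (hc : 0 < c)
    (hJ' : LocallyLipschitz (gradient J))
    (hh : ContDiff ℝ 1 h) (hh' : LocallyLipschitz (gradient h))
    (hA2 : (∃ θ, 0 ≤ h θ) ∧ ∀ ρ ∈ Set.range h, ρ ≤ 0 →
      ∃ L > 0, ∀ θ, h θ ≤ 0 → ρ ≤ h θ → L < ‖gradient h θ‖) :
    LocallyLipschitz (Fvec J h c) ∧ Continuous (Fvec J h c) := by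
  have hu := locallyLipschitz_max_inner_gradient_sub (c := c) hJ' hh hh'
  have hF : LocallyLipschitz (Fvec J h c) := by
    refine LocallyLipschitz.of_eventuallyEq fun x => ?_
    by_cases hx : gradient h x = 0
    · refine ⟨_, hJ'.neg, ?_⟩
      have hcont : Continuous fun θ => ⟪gradient J θ, gradient h θ⟫ - c * h θ :=
        (hJ'.inner hh').continuous.sub (continuous_const.mul hh.continuous)
      have hneg : ⟪gradient J x, gradient h x⟫ - c * h x < 0 := by
        rw [hx, inner_zero_right, zero_sub, neg_neg_iff_pos]
        exact mul_pos hc (pos_of_gradient_eq_zero hA2.2 hx)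
      filter_upwards [hcont.continuousAt.eventually_lt continuousAt_const hneg] with θ hθ
      exact Fvec_eq_neg_gradient hθ.le
    · have hsq : 0 < ‖gradient h x‖ ^ 2 := by positivity
      have hb := half_pos hsq
      have hnorm : LocallyLipschitz fun θ => ‖gradient h θ‖ ^ 2 :=
        (contDiff_norm_sq ℝ).locallyLipschitz.comp hh'
      refine ⟨_, hJ'.neg.add (((lipschitzWith_inv_max_const hb).locallyLipschitz.comp hnorm).smul
        (hu.smul hh')), ?_⟩
      filter_upwards [continuousAt_const.eventually_lt hnorm.continuous.continuousAt
        (half_lt_self hsq)] with θ hθ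
      exact Fvec_eq_of_le_norm_sq hb hθ.le
  exact ⟨hF, hF.continuous⟩

/-- under (A2), the vector field `F` is locally Lipschitz on ℝⁿ,
in particular continuous. -/
theorem stmt1 {n : ℕ} (hn : 1 ≤ n) (J h : EuclideanSpace ℝ (Fin n) → ℝ) (c : ℝ) (hc : 0 < c)
    (hJ : ContDiff ℝ 1 J) (hJ' : LocallyLipschitz (gradient J))
    (hh : ContDiff ℝ 1 h) (hh' : LocallyLipschitz (gradient h))
    (hA2 : (∃ θ, 0 ≤ h θ) ∧ ∀ ρ ∈ Set.range h, ρ ≤ 0 →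
      ∃ L > 0, ∀ θ, h θ ≤ 0 → ρ ≤ h θ → L < ‖gradient h θ‖) :
    LocallyLipschitz (Fvec J h c) ∧ Continuous (Fvec J h c) :=
  stmt1_general J h c hc hJ' hh hh' hA2
end

section
/- (Proposition 1, pointwise form.) Suppose (A2) holds. Then for every θ ∈ ℝⁿ, ∇h(θ)ᵀF(θ) + c·h(θ) ≥ 0. -/
open scoped RealInnerProductSpace
open Set Filter

/-- Proposition 1, pointwise form: under (A2),
`∇h(θ)ᵀ F(θ) + c·h(θ) ≥ 0` for every θ. -/
theorem stmt2 {n : ℕ} (hn : 1 ≤ n) (J h : EuclideanSpace ℝ (Fin n) → ℝ) (c : ℝ) (hc : 0 < c)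
    (hJ : ContDiff ℝ 1 J) (hJ' : LocallyLipschitz (gradient J))
    (hh : ContDiff ℝ 1 h) (hh' : LocallyLipschitz (gradient h))
    (hA2 : (∃ θ, 0 ≤ h θ) ∧ ∀ ρ ∈ Set.range h, ρ ≤ 0 →
      ∃ L > 0, ∀ θ, h θ ≤ 0 → ρ ≤ h θ → L < ‖gradient h θ‖) :
    ∀ θ : EuclideanSpace ℝ (Fin n), 0 ≤ ⟪gradient h θ, Fvec J h c θ⟫ + c * h θ := by
  intro θ
  unfold Fvec
  by_cases hg : gradient h θ = 0
  · simp only [hg, if_pos rfl]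
    rw [inner_zero_left]
    -- need 0 ≤ c * h θ; show h θ > 0 else contradiction with A2
    by_contra hcon
    push_neg at hcon
    have hθ0 : h θ ≤ 0 := by nlinarith
    obtain ⟨L, hL, hall⟩ := hA2.2 (h θ) ⟨θ, rfl⟩ hθ0
    have := hall θ hθ0 le_rfl
    rw [hg, norm_zero] at this
    linarith
  · simp only [if_neg hg]
    rw [inner_add_right, inner_smul_right, inner_neg_right, real_inner_self_eq_norm_sq]
    have hnz : ‖gradient h θ‖ ^ 2 ≠ 0 := pow_ne_zero 2 (norm_ne_zero_iff.mpr hg)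
    rw [div_mul_cancel₀ _ hnz]
    rw [real_inner_comm]
    have := le_max_left (⟪gradient J θ, gradient h θ⟫ - c * h θ) 0
    linarith
end

section
/- (Proposition 1, flow form.) Suppose (A2) holds. Let θ : [t₀, ∞) → ℝⁿ be differentiable with θ′(t) = F(θ(t)) for all t ≥ t₀. Then h(θ(t)) ≥ h(θ(t₀))·e^{−c(t−t₀)} for all t ≥ t₀. Consequently, the safe set C is forward invariant for the dynamics θ′ = F(θ), and every superlevel set C_ρ (ρ ≤ 0 in the image of h) is forward invariant. -/
open scoped RealInnerProductSpace
open Set Filter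

/-!
Everywhere `⟪∇h, F⟫ ≥ -c·h`: where `∇h ≠ 0` the correction term of `F` adds exactly the deficit
`max (⟪∇J, ∇h⟫ - c·h) 0`, and where `∇h = 0` assumption (A2) forces `h ≥ 0`. Hence
`(h ∘ θ)' ≥ -c·(h ∘ θ)`, and Grönwall's inequality applied to `-(h ∘ θ)` gives the exponential
lower bound, from which forward invariance of every `C_ρ` with `ρ ≤ 0` follows.
-/

open Real

theorem HasGradientAt.comp_hasDerivAt {F : Type*} [NormedAddCommGroup F] [InnerProductSpace ℝ F]
    [CompleteSpace F] {f : F → ℝ} {g : F} {γ : ℝ → F} {v : F} {t : ℝ}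
    (hf : HasGradientAt f g (γ t)) (hγ : HasDerivAt γ v t) :
    HasDerivAt (f ∘ γ) ⟪g, v⟫ t := by
  simpa only [InnerProductSpace.toDual_apply_apply] using
    hf.hasFDerivAt.comp_hasDerivAt t hγ

theorem mul_exp_le_of_neg_mul_le_deriv {f f' : ℝ → ℝ} {c t₀ : ℝ}
    (hf : ∀ t ≥ t₀, HasDerivAt f (f' t) t) (hbound : ∀ t ≥ t₀, -(c * f t) ≤ f' t) :
    ∀ t ≥ t₀, f t₀ * exp (-(c * (t - t₀))) ≤ f t := by
  intro t ht
  have hgronwall := le_gronwallBound_of_liminf_deriv_right_le (f := fun s => -f s)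
    (f' := fun s => -f' s) (δ := -f t₀) (K := -c) (ε := 0) (a := t₀) (b := t)
    (fun s hs => (hf s hs.1).neg.continuousAt.continuousWithinAt)
    (fun s hs _ hr => (hf s hs.1).neg.hasDerivWithinAt.liminf_right_slope_le hr) le_rfl
    (fun s hs => by linarith [hbound s hs.1]) t ⟨ht, le_rfl⟩
  rw [gronwallBound_ε0, neg_mul c] at hgronwall
  linarith

theorem nonneg_of_gradient_eq_zero {E : Type*} [NormedAddCommGroup E] [InnerProductSpace ℝ E]
    [CompleteSpace E] {h : E → ℝ}
    (hA2 : ∀ ρ ∈ range h, ρ ≤ 0 → ∃ L > 0, ∀ θ, h θ ≤ 0 → ρ ≤ h θ → L < ‖gradient h θ‖)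
    {x : E} (hx : gradient h x = 0) : 0 ≤ h x := by
  by_contra! hneg
  obtain ⟨L, hL, hgrad⟩ := hA2 (h x) ⟨x, rfl⟩ hneg.le
  have := hgrad x hneg.le le_rfl
  rw [hx, norm_zero] at this
  linarith

theorem neg_mul_le_inner_gradient_Fvec {n : ℕ} (J h : EuclideanSpace ℝ (Fin n) → ℝ) {c : ℝ}
    (hc : 0 ≤ c) (x : EuclideanSpace ℝ (Fin n)) (hzero : gradient h x = 0 → 0 ≤ h x) :
    -(c * h x) ≤ ⟪gradient h x, Fvec J h c x⟫ := by
  by_cases hg : gradient h x = 0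
  · simp only [Fvec, hg, if_true, inner_zero_left, neg_nonpos]
    exact mul_nonneg hc (hzero hg)
  · have hnorm : ‖gradient h x‖ ^ 2 ≠ 0 := pow_ne_zero 2 (norm_ne_zero_iff.mpr hg)
    rw [Fvec, if_neg hg, inner_add_right, inner_neg_right, real_inner_smul_right,
      real_inner_self_eq_norm_sq, div_mul_cancel₀ _ hnorm, real_inner_comm]
    linarith [le_max_left (⟪gradient J x, gradient h x⟫ - c * h x) 0]

theorem le_mul_of_nonpos_of_le_of_le_one {ρ a e : ℝ} (hρ : ρ ≤ 0) (ha : ρ ≤ a) (he₀ : 0 ≤ e)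
    (he₁ : e ≤ 1) : ρ ≤ a * e := by
  rcases le_or_gt 0 a with ha₀ | ha₀
  · exact hρ.trans (mul_nonneg ha₀ he₀)
  · nlinarith

theorem stmt3_general {n : ℕ} (J h : EuclideanSpace ℝ (Fin n) → ℝ) (c : ℝ) (hc : 0 < c)
    (hh : ContDiff ℝ 1 h)
    (hA2 : (∃ θ, 0 ≤ h θ) ∧ ∀ ρ ∈ Set.range h, ρ ≤ 0 →
      ∃ L > 0, ∀ θ, h θ ≤ 0 → ρ ≤ h θ → L < ‖gradient h θ‖) :
    ∀ (t₀ : ℝ) (θ : ℝ → EuclideanSpace ℝ (Fin n)),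
      (∀ t ≥ t₀, HasDerivAt θ (Fvec J h c (θ t)) t) →
      (∀ t ≥ t₀, h (θ t₀) * Real.exp (-(c * (t - t₀))) ≤ h (θ t)) ∧
      (0 ≤ h (θ t₀) → ∀ t ≥ t₀, 0 ≤ h (θ t)) ∧
      (∀ ρ ∈ Set.range h, ρ ≤ 0 → ρ ≤ h (θ t₀) → ∀ t ≥ t₀, ρ ≤ h (θ t)) := by
  intro t₀ θ hθ
  have hlower : ∀ t ≥ t₀, h (θ t₀) * exp (-(c * (t - t₀))) ≤ h (θ t) :=
    mul_exp_le_of_neg_mul_le_deriv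
      (fun t ht => ((hh.differentiable one_ne_zero) (θ t)).hasGradientAt.comp_hasDerivAt (hθ t ht))
      (fun t _ => neg_mul_le_inner_gradient_Fvec J h hc.le (θ t)
        (nonneg_of_gradient_eq_zero hA2.2))
  have hsuperlevel : ∀ ρ ≤ 0, ρ ≤ h (θ t₀) → ∀ t ≥ t₀, ρ ≤ h (θ t) := fun ρ hρ hρ₀ t ht =>
    (le_mul_of_nonpos_of_le_of_le_one hρ hρ₀ (exp_pos _).le
      (exp_le_one_iff.mpr (by nlinarith))).trans (hlower t ht)
  exact ⟨hlower, hsuperlevel 0 le_rfl, fun ρ _ hρ => hsuperlevel ρ hρ⟩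

/-- Proposition 1, flow form: under (A2), along any solution of θ' = F(θ),
`h(θ(t)) ≥ h(θ(t₀))·exp(−c(t−t₀))`; consequently the safe set C and every superlevel
set C_ρ (ρ ≤ 0 in the image of h) are forward invariant. -/
theorem stmt3 {n : ℕ} (hn : 1 ≤ n) (J h : EuclideanSpace ℝ (Fin n) → ℝ) (c : ℝ) (hc : 0 < c)
    (hJ : ContDiff ℝ 1 J) (hJ' : LocallyLipschitz (gradient J))
    (hh : ContDiff ℝ 1 h) (hh' : LocallyLipschitz (gradient h))
    (hA2 : (∃ θ, 0 ≤ h θ) ∧ ∀ ρ ∈ Set.range h, ρ ≤ 0 →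
      ∃ L > 0, ∀ θ, h θ ≤ 0 → ρ ≤ h θ → L < ‖gradient h θ‖) :
    ∀ (t₀ : ℝ) (θ : ℝ → EuclideanSpace ℝ (Fin n)),
      (∀ t ≥ t₀, HasDerivAt θ (Fvec J h c (θ t)) t) →
      (∀ t ≥ t₀, h (θ t₀) * Real.exp (-(c * (t - t₀))) ≤ h (θ t)) ∧
      (0 ≤ h (θ t₀) → ∀ t ≥ t₀, 0 ≤ h (θ t)) ∧
      (∀ ρ ∈ Set.range h, ρ ≤ 0 → ρ ≤ h (θ t₀) → ∀ t ≥ t₀, ρ ≤ h (θ t)) :=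
  stmt3_general J h c hc hh hA2
end

section
/- (Lemma 1, pointwise form.) Suppose (A1), (A2) and (A3) hold. Then for every θ ∈ C with θ ≠ θ*_c, ∇J(θ)ᵀF(θ) < 0; that is, V₁(θ) = J(θ) − J(θ*_c) has strictly negative derivative along the vector field F at every point of C other than θ*_c. -/
open scoped RealInnerProductSpace
open Set Filter

/-- Lemma 1, pointwise form: under (A1)–(A3), the objective function
strictly decreases along `F` at every safe point other than the constrained minimizer:
`∇J(θ)ᵀ F(θ) < 0` for all θ ∈ C, θ ≠ θ*_c. -/
theorem stmt4 {n : ℕ} (hn : 1 ≤ n) (J h : EuclideanSpace ℝ (Fin n) → ℝ) (c : ℝ) (hc : 0 < c)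
    (θc : EuclideanSpace ℝ (Fin n))
    (hJ : ContDiff ℝ 1 J) (hJ' : LocallyLipschitz (gradient J))
    (hh : ContDiff ℝ 1 h) (hh' : LocallyLipschitz (gradient h))
    (hA1 : 0 ≤ h θc ∧ (∀ θ, 0 ≤ h θ → θ ≠ θc → J θc < J θ) ∧
      (∀ θ, 0 ≤ h θ → gradient J θ = 0 → θ = θc))
    (hA2 : (∃ θ, 0 ≤ h θ) ∧ ∀ ρ ∈ Set.range h, ρ ≤ 0 →
      ∃ L > 0, ∀ θ, h θ ≤ 0 → ρ ≤ h θ → L < ‖gradient h θ‖)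
    (hA3 : ∀ θ, h θ = 0 →
      ⟪gradient h θ, gradient J θ⟫ = ‖gradient h θ‖ * ‖gradient J θ‖ → θ = θc) :
    ∀ θ : EuclideanSpace ℝ (Fin n), 0 ≤ h θ → θ ≠ θc →
      ⟪gradient J θ, Fvec J h c θ⟫ < 0 := by
  intro θ hθ hne
  have hJ0 : gradient J θ ≠ 0 := fun h0 => hne (hA1.2.2 θ hθ h0)
  have hJpos : (0:ℝ) < ‖gradient J θ‖ := norm_pos_iff.mpr hJ0
  unfold Fvec
  split_ifs with hgh
  · rw [inner_neg_right, real_inner_self_eq_norm_sq]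
    nlinarith
  · have hbpos : (0:ℝ) < ‖gradient h θ‖ := norm_pos_iff.mpr hgh
    set a := ‖gradient J θ‖ with ha
    set b := ‖gradient h θ‖ with hb
    set s := ⟪gradient J θ, gradient h θ⟫ with hs
    rw [inner_add_right, inner_neg_right, real_inner_self_eq_norm_sq,
      real_inner_smul_right, ← hs]
    rcases le_or_gt (s - c * h θ) 0 with hmax | hmax
    · rw [max_eq_right hmax]
      simp only [zero_div, zero_mul, add_zero]
      nlinarith
    · rw [max_eq_left hmax.le]
      have hcs : s ≤ a * b := real_inner_le_norm _ _
      have hch : 0 ≤ c * h θ := mul_nonneg hc.le hθ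
      have hspos : 0 < s := by linarith
      have hb2 : (0:ℝ) < b ^ 2 := by positivity
      have key : (s - c * h θ) * s < a ^ 2 * b ^ 2 := by
        rcases eq_or_lt_of_le hθ with h0 | h0
        · have hne2 : s ≠ a * b := by
            intro heq
            apply hne
            apply hA3 θ h0.symm
            rw [real_inner_comm, ← hs, heq]; ring
          have hlt : s < a * b := lt_of_le_of_ne hcs hne2
          nlinarith
        · nlinarith [mul_self_le_mul_self hspos.le hcs, mul_pos (mul_pos hc h0) hspos]
      have h2 : (s - c * h θ) * s / b ^ 2 < a ^ 2 := by
        rw [div_lt_iff₀ hb2]; linarith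
      have h3 : (s - c * h θ) / b ^ 2 * s = (s - c * h θ) * s / b ^ 2 := by ring
      linarith [h3 ▸ h2]
end

section
/- (Uniqueness of the equilibrium.) Suppose (A1), (A2) and (A3) hold. Then θ*_c is the unique equilibrium of the vector field F: F(θ*_c) = 0, and every θ ∈ ℝⁿ with F(θ) = 0 satisfies θ = θ*_c. -/
/-!
A zero of `F` is either a critical point of `J` in `C` or a point of `∂C` at which `∇J` is a
nonnegative multiple of `∇h` (by (A2), `∇h` can only vanish in the interior of `C`); by (A1)
and (A3) both kinds of points equal `θ*_c`. Conversely `θ*_c` is of one of these kinds: in the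
interior of `C` it is a local minimum of `J`, and on `∂C`, were `∇J` not aligned with `∇h`, the
direction `‖∇J‖ ∇h - ‖∇h‖ ∇J` would increase `h` and decrease `J`, against minimality.
-/

open scoped RealInnerProductSpace
open Set Filter Topology

section Descent

variable {E : Type*} [NormedAddCommGroup E] [InnerProductSpace ℝ E] [CompleteSpace E]

theorem HasGradientAt.hasDerivAt_add_smul {f : E → ℝ} {g x : E} (hf : HasGradientAt f g x)
    (d : E) : HasDerivAt (fun t : ℝ => f (x + t • d)) ⟪g, d⟫ 0 := by
  have hline : HasDerivAt (fun t : ℝ => x + t • d) d 0 := by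
    simpa using ((hasDerivAt_id (0 : ℝ)).smul_const d).const_add x
  exact (hasGradientAt_iff_hasFDerivAt.mp hf).comp_hasDerivAt_of_eq (0 : ℝ) hline (by simp)

theorem HasDerivAt.eventually_lt_of_pos {φ : ℝ → ℝ} {φ' a : ℝ} (hφ : HasDerivAt φ φ' a)
    (hpos : 0 < φ') : ∀ᶠ t in 𝓝[>] a, φ a < φ t := by
  filter_upwards [(hasDerivAt_iff_tendsto_slope_left_right.mp hφ).2.eventually
    (eventually_gt_nhds hpos), self_mem_nhdsWithin] with t hslope ht
  rwa [slope_def_field, lt_div_iff₀ (sub_pos.mpr ht), zero_mul, sub_pos] at hslope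

theorem inner_gradient_eq_norm_mul_norm_of_isMinOn {J h : E → ℝ} {x : E}
    (hJ : DifferentiableAt ℝ J x) (hh : DifferentiableAt ℝ h x) (hx : 0 ≤ h x)
    (hmin : IsMinOn J {y | 0 ≤ h y} x) :
    ⟪gradient h x, gradient J x⟫ = ‖gradient h x‖ * ‖gradient J x‖ := by
  set G := gradient h x
  set g := gradient J x
  by_contra hne
  have hlt : ⟪G, g⟫ < ‖G‖ * ‖g‖ := (real_inner_le_norm G g).lt_of_ne hne
  have hG : 0 < ‖G‖ := norm_pos_iff.mpr fun h0 => hne (by simp [h0])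
  have hg : 0 < ‖g‖ := norm_pos_iff.mpr fun h0 => hne (by simp [h0])
  set d := ‖g‖ • G - ‖G‖ • g
  have hGd : 0 < ⟪G, d⟫ := by
    have : ⟪G, d⟫ = ‖G‖ * (‖G‖ * ‖g‖ - ⟪G, g⟫) := by
      simp only [d, inner_sub_right, real_inner_smul_right, real_inner_self_eq_norm_sq]; ring
    rw [this]; exact mul_pos hG (sub_pos.mpr hlt)
  have hgd : ⟪g, d⟫ < 0 := by
    have : ⟪g, d⟫ = ‖g‖ * (⟪G, g⟫ - ‖G‖ * ‖g‖) := by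
      simp only [d, inner_sub_right, real_inner_smul_right,
        real_inner_self_eq_norm_sq, real_inner_comm G g]; ring
    rw [this]; exact mul_neg_of_pos_of_neg hg (sub_neg.mpr hlt)
  obtain ⟨t, hht, hJt⟩ := ((hh.hasGradientAt.hasDerivAt_add_smul d).eventually_lt_of_pos hGd
    |>.and ((hJ.hasGradientAt.hasDerivAt_add_smul d).neg.eventually_lt_of_pos
      (neg_pos.mpr hgd))).exists
  simp only [Pi.neg_apply, zero_smul, add_zero, neg_lt_neg_iff] at hht hJt
  exact hJt.not_ge (hmin (hx.trans hht.le))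

end Descent

section Equilibria

variable {n : ℕ} {J h : EuclideanSpace ℝ (Fin n) → ℝ} {c : ℝ} {θ : EuclideanSpace ℝ (Fin n)}

theorem Fvec_eq_zero_iff (hc : 0 < c) (hregular : gradient h θ = 0 → 0 < h θ) :
    Fvec J h c θ = 0 ↔ (gradient J θ = 0 ∧ 0 ≤ h θ) ∨
      (h θ = 0 ∧ ⟪gradient h θ, gradient J θ⟫ = ‖gradient h θ‖ * ‖gradient J θ‖) := by
  unfold Fvec
  set G := gradient h θ
  set g := gradient J θ
  split_ifs with hG0
  · have hpos := hregular hG0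
    simp [hpos.le, hpos.ne']
  have hG : 0 < ‖G‖ := norm_pos_iff.mpr hG0
  set m := max (⟪g, G⟫ - c * h θ) 0
  rw [neg_add_eq_zero, inner_eq_norm_mul_iff_real]
  constructor
  · intro hg
    have hm : ⟪g, G⟫ = m := by
      rw [hg, real_inner_smul_left, real_inner_self_eq_norm_sq]; field_simp
    have hh : 0 ≤ h θ := (mul_nonneg_iff_of_pos_left hc).mp <| by
      linarith [le_max_left (⟪g, G⟫ - c * h θ) 0]
    rcases hh.eq_or_lt with h0 | hpos
    · have hμ : 0 ≤ m / ‖G‖ ^ 2 := by positivity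
      refine Or.inr ⟨h0.symm, ?_⟩
      rw [hg, norm_smul, Real.norm_of_nonneg hμ, smul_smul, mul_comm]
    · have hm0 : m = 0 := (max_choice _ _).resolve_left fun he => by
        linarith [mul_pos hc hpos]
      exact Or.inl ⟨by simp [hg, hm0], hh⟩
  · rintro (⟨hg, hh⟩ | ⟨hh, hpar⟩)
    · have : m = 0 := by simp only [m, hg, inner_zero_left]; exact max_eq_right (by nlinarith)
      simp [hg, this]
    · have hinner : ⟪g, G⟫ = ‖G‖ * ‖g‖ := by
        rw [real_inner_comm]; exact inner_eq_norm_mul_iff_real.mpr hpar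
      have hm : m = ‖G‖ * ‖g‖ := by
        simp only [m, hh, mul_zero, sub_zero, hinner]
        exact max_eq_left (by positivity)
      calc g = ‖G‖⁻¹ • ‖G‖ • g := by rw [inv_smul_smul₀ hG.ne']
        _ = (m / ‖G‖ ^ 2) • G := by
          rw [← hpar, smul_smul, hm]; congr 1; field_simp

end Equilibria

theorem stmt5_general {n : ℕ} (J h : EuclideanSpace ℝ (Fin n) → ℝ) (c : ℝ) (hc : 0 < c)
    (θc : EuclideanSpace ℝ (Fin n))
    (hJ : ContDiff ℝ 1 J)
    (hh : ContDiff ℝ 1 h)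
    (hA1 : 0 ≤ h θc ∧ (∀ θ, 0 ≤ h θ → θ ≠ θc → J θc < J θ) ∧
      (∀ θ, 0 ≤ h θ → gradient J θ = 0 → θ = θc))
    (hA2 : (∃ θ, 0 ≤ h θ) ∧ ∀ ρ ∈ Set.range h, ρ ≤ 0 →
      ∃ L > 0, ∀ θ, h θ ≤ 0 → ρ ≤ h θ → L < ‖gradient h θ‖)
    (hA3 : ∀ θ, h θ = 0 →
      ⟪gradient h θ, gradient J θ⟫ = ‖gradient h θ‖ * ‖gradient J θ‖ → θ = θc) :
    Fvec J h c θc = 0 ∧ ∀ θ : EuclideanSpace ℝ (Fin n), Fvec J h c θ = 0 → θ = θc := by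
  obtain ⟨hθc, hmin, hstationary⟩ := hA1
  have hregular : ∀ θ, gradient h θ = 0 → 0 < h θ := fun θ hG => by
    by_contra! hθ
    obtain ⟨L, hL, hLθ⟩ := hA2.2 (h θ) ⟨θ, rfl⟩ hθ
    simpa [hG] using hL.trans (hLθ θ hθ le_rfl)
  have hminOn : IsMinOn J {θ | 0 ≤ h θ} θc := fun θ (hθ : 0 ≤ h θ) => show J θc ≤ J θ by
    rcases eq_or_ne θ θc with rfl | hne
    exacts [le_rfl, (hmin θ hθ hne).le]
  refine ⟨(Fvec_eq_zero_iff hc (hregular θc)).mpr ?_, fun θ hθ => ?_⟩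
  · rcases hθc.lt_or_eq with hpos | hzero
    · have hloc : IsLocalMin J θc := hminOn.isLocalMin <| mem_of_superset
        ((isOpen_lt continuous_const hh.continuous).mem_nhds hpos) fun θ (hθ : 0 < h θ) => hθ.le
      exact Or.inl ⟨by simp [gradient, hloc.fderiv_eq_zero], hθc⟩
    · exact Or.inr ⟨hzero.symm,
        inner_gradient_eq_norm_mul_norm_of_isMinOn (hJ.differentiable one_ne_zero θc)
          (hh.differentiable one_ne_zero θc) hθc hminOn⟩
  · rcases (Fvec_eq_zero_iff hc (hregular θ)).mp hθ with ⟨hg, hθC⟩ | ⟨hzero, hpar⟩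
    exacts [hstationary θ hθC hg, hA3 θ hzero hpar]

/-- uniqueness of the equilibrium: under (A1)–(A3), θ*_c is the unique
equilibrium of the vector field F. -/
theorem stmt5 {n : ℕ} (hn : 1 ≤ n) (J h : EuclideanSpace ℝ (Fin n) → ℝ) (c : ℝ) (hc : 0 < c)
    (θc : EuclideanSpace ℝ (Fin n))
    (hJ : ContDiff ℝ 1 J) (hJ' : LocallyLipschitz (gradient J))
    (hh : ContDiff ℝ 1 h) (hh' : LocallyLipschitz (gradient h))
    (hA1 : 0 ≤ h θc ∧ (∀ θ, 0 ≤ h θ → θ ≠ θc → J θc < J θ) ∧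
      (∀ θ, 0 ≤ h θ → gradient J θ = 0 → θ = θc))
    (hA2 : (∃ θ, 0 ≤ h θ) ∧ ∀ ρ ∈ Set.range h, ρ ≤ 0 →
      ∃ L > 0, ∀ θ, h θ ≤ 0 → ρ ≤ h θ → L < ‖gradient h θ‖)
    (hA3 : ∀ θ, h θ = 0 →
      ⟪gradient h θ, gradient J θ⟫ = ‖gradient h θ‖ * ‖gradient J θ‖ → θ = θc) :
    Fvec J h c θc = 0 ∧ ∀ θ : EuclideanSpace ℝ (Fin n), Fvec J h c θ = 0 → θ = θc :=
  stmt5_general J h c hc θc hJ hh hA1 hA2 hA3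
end

section
/- (Lyapunov derivative bound, equations (16)–(17).) Let L > 0 and let θ ∈ ℝⁿ satisfy ∇h(θ) ≠ 0 with ‖∇h(θ)‖ ≥ L, ∇J(θ) ≠ 0, h(θ) ≤ 0, and ∇J(θ)ᵀ∇h(θ) − c·h(θ) ≥ 0. Set f(θ) = ∇J(θ)ᵀ∇h(θ)/(‖∇J(θ)‖·‖∇h(θ)‖). Then for every α ∈ ℝ: −α·∇h(θ)ᵀF(θ) + ∇J(θ)ᵀF(θ) ≤ c·|h(θ)|·(−α + ‖∇J(θ)‖/L) − (1 − f(θ)²)·‖∇J(θ)‖². -/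
open scoped RealInnerProductSpace
open Set Filter

/-- Lyapunov derivative bound, eqs. (16)–(17). -/
theorem stmt8 {n : ℕ} (hn : 1 ≤ n) (J h : EuclideanSpace ℝ (Fin n) → ℝ) (c : ℝ) (hc : 0 < c)
    (hJ : ContDiff ℝ 1 J) (hJ' : LocallyLipschitz (gradient J))
    (hh : ContDiff ℝ 1 h) (hh' : LocallyLipschitz (gradient h))
    (L : ℝ) (hL : 0 < L)
    (θ : EuclideanSpace ℝ (Fin n)) (hgrad : gradient h θ ≠ 0)
    (hgradL : L ≤ ‖gradient h θ‖) (hgradJ : gradient J θ ≠ 0) (hneg : h θ ≤ 0)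
    (hact : 0 ≤ ⟪gradient J θ, gradient h θ⟫ - c * h θ) :
    ∀ α : ℝ,
      -α * ⟪gradient h θ, Fvec J h c θ⟫ + ⟪gradient J θ, Fvec J h c θ⟫ ≤
        c * |h θ| * (-α + ‖gradient J θ‖ / L) -
        (1 - (⟪gradient J θ, gradient h θ⟫ / (‖gradient J θ‖ * ‖gradient h θ‖)) ^ 2) *
          ‖gradient J θ‖ ^ 2 := by
  intro α
  set g := gradient h θ with hg
  set j := gradient J θ with hj
  set a : ℝ := ⟪j, g⟫ with ha
  set G : ℝ := ‖g‖ with hG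
  set Jn : ℝ := ‖j‖ with hJn
  have hG0 : 0 < G := norm_pos_iff.mpr hgrad
  have hJn0 : 0 < Jn := norm_pos_iff.mpr hgradJ
  have hFv : Fvec J h c θ = -j + ((a - c * h θ) / G ^ 2) • g := by
    rw [Fvec, if_neg hgrad, max_eq_left hact]
  have habs : |h θ| = -(h θ) := abs_of_nonpos hneg
  have hinner_g : ⟪g, Fvec J h c θ⟫ = -(c * h θ) := by
    rw [hFv, inner_add_right, inner_neg_right, real_inner_smul_right,
      real_inner_self_eq_norm_sq, real_inner_comm]
    rw [← ha, ← hG]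
    field_simp
    ring
  have hinner_j : ⟪j, Fvec J h c θ⟫ = -Jn ^ 2 + ((a - c * h θ) / G ^ 2) * a := by
    rw [hFv, inner_add_right, inner_neg_right, real_inner_smul_right,
      real_inner_self_eq_norm_sq]
  have hCS : a ≤ Jn * G := real_inner_le_norm j g
  -- key: a / G^2 ≤ Jn / L
  have hkey : a / G ^ 2 ≤ Jn / L := by
    rw [div_le_div_iff₀ (by positivity) hL]
    nlinarith [mul_nonneg hJn0.le hG0.le, hgradL]
  rw [hinner_g, hinner_j, habs]
  have hh0 : 0 ≤ -(h θ) := by linarith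
  have h2 : (-(h θ)) * c * (a / G ^ 2) ≤ (-(h θ)) * c * (Jn / L) :=
    mul_le_mul_of_nonneg_left hkey (by positivity)
  have hGne : (G : ℝ) ≠ 0 := hG0.ne'
  have hexp : ((a - c * h θ) / G ^ 2) * a = a ^ 2 / G ^ 2 + (-(h θ)) * c * (a / G ^ 2) := by
    field_simp
    ring
  have hrhs : (1 - (a / (Jn * G)) ^ 2) * Jn ^ 2 = Jn ^ 2 - a ^ 2 / G ^ 2 := by
    field_simp
  rw [hrhs, hexp]
  nlinarith [h2]
end

section
/- (Case A: compact superlevel sets.) Let K ⊂ ℝⁿ be compact and L > 0 be such that ‖∇h(θ)‖ ≥ L for all θ ∈ K with h(θ) ≤ 0. If α ≥ (1/L)·sup_{θ ∈ K} ‖∇J(θ)‖, then for every θ ∈ K with ∇h(θ) ≠ 0, h(θ) ≤ 0 and ∇J(θ)ᵀ∇h(θ) − c·h(θ) ≥ 0 one has −α·∇h(θ)ᵀF(θ) + ∇J(θ)ᵀF(θ) ≤ 0. -/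
open scoped RealInnerProductSpace
open Set Filter

/-- Case A: compact superlevel sets: on a compact set K where
‖∇h‖ ≥ L > 0 on the unsafe part, taking α ≥ (1/L)·sup_{K} ‖∇J‖ makes the Lyapunov
derivative nonpositive at every unsafe point of K with active max term. -/
theorem stmt9 {n : ℕ} (hn : 1 ≤ n) (J h : EuclideanSpace ℝ (Fin n) → ℝ) (c : ℝ) (hc : 0 < c)
    (hJ : ContDiff ℝ 1 J) (hJ' : LocallyLipschitz (gradient J))
    (hh : ContDiff ℝ 1 h) (hh' : LocallyLipschitz (gradient h))
    (K : Set (EuclideanSpace ℝ (Fin n))) (hK : IsCompact K)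
    (L : ℝ) (hL : 0 < L) (hLgrad : ∀ θ ∈ K, h θ ≤ 0 → L ≤ ‖gradient h θ‖)
    (α : ℝ) (hα : (1 / L) * sSup ((fun θ => ‖gradient J θ‖) '' K) ≤ α) :
    ∀ θ ∈ K, gradient h θ ≠ 0 → h θ ≤ 0 →
      0 ≤ ⟪gradient J θ, gradient h θ⟫ - c * h θ →
      -α * ⟪gradient h θ, Fvec J h c θ⟫ + ⟪gradient J θ, Fvec J h c θ⟫ ≤ 0 := by
  intro θ hθ hg hhle hm
  set gJ := gradient J θ with hgJ
  set g := gradient h θ with hgdef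
  have hgpos : (0:ℝ) < ‖g‖ := norm_pos_iff.mpr hg
  -- sup bound
  set S := sSup ((fun θ => ‖gradient J θ‖) '' K) with hS
  have hbdd : BddAbove ((fun θ => ‖gradient J θ‖) '' K) :=
    (hK.image (continuous_norm.comp hJ'.continuous)).bddAbove
  have hS1 : ‖gJ‖ ≤ S := le_csSup hbdd ⟨θ, hθ, rfl⟩
  have hLg : L ≤ ‖g‖ := hLgrad θ hθ hhle
  have hαL : ‖gJ‖ ≤ α * L := by
    have : S ≤ α * L := by
      have := mul_le_mul_of_nonneg_right hα hL.le
      rwa [one_div, inv_mul_eq_div, div_mul_cancel₀ _ hL.ne'] at this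
    linarith
  have hα0 : 0 ≤ α := by nlinarith [norm_nonneg gJ]
  have hCS : ⟪gJ, g⟫ ≤ ‖gJ‖ * ‖g‖ := real_inner_le_norm gJ g
  have hCS' : -(‖gJ‖ * ‖g‖) ≤ ⟪gJ, g⟫ := neg_le_of_abs_le (abs_real_inner_le_norm gJ g)
  have hmax : max (⟪gJ, g⟫ - c * h θ) 0 = ⟪gJ, g⟫ - c * h θ := max_eq_left hm
  have hF : Fvec J h c θ = -gJ + ((⟪gJ, g⟫ - c * h θ) / ‖g‖ ^ 2) • g := by
    rw [Fvec, if_neg hg, hmax]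
  rw [hF]
  set s := ⟪gJ, g⟫ with hs
  have e1 : ⟪g, -gJ + ((s - c * h θ) / ‖g‖ ^ 2) • g⟫
      = -s + ((s - c * h θ) / ‖g‖ ^ 2) * ‖g‖ ^ 2 := by
    rw [inner_add_right, inner_neg_right, real_inner_smul_right,
      real_inner_self_eq_norm_sq, real_inner_comm]
  have e2 : ⟪gJ, -gJ + ((s - c * h θ) / ‖g‖ ^ 2) • g⟫
      = -‖gJ‖ ^ 2 + ((s - c * h θ) / ‖g‖ ^ 2) * s := by
    rw [inner_add_right, inner_neg_right, real_inner_smul_right,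
      real_inner_self_eq_norm_sq]
  rw [e1, e2]
  have hg2 : (0:ℝ) < ‖g‖ ^ 2 := by positivity
  rw [div_mul_cancel₀ _ hg2.ne']
  have hαg : ‖gJ‖ * ‖g‖ ≤ α * ‖g‖ ^ 2 := by nlinarith [mul_le_mul_of_nonneg_left hLg hα0]
  have key : -α * (-s + (s - c * h θ)) * ‖g‖ ^ 2
      + (-‖gJ‖ ^ 2 * ‖g‖ ^ 2 + (s - c * h θ) * s) ≤ 0 := by
    nlinarith [mul_nonneg (mul_nonneg hc.le (neg_nonneg.mpr hhle))
        (sub_nonneg.mpr (hCS.trans hαg)),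
      mul_nonneg (sub_nonneg.mpr hCS) (sub_nonneg.mpr (neg_le.mp hCS')),
      sq_nonneg (‖gJ‖ * ‖g‖ - s)]
  have := div_nonpos_of_nonpos_of_nonneg key hg2.le
  rw [add_div, mul_div_assoc, div_self hg2.ne', mul_one] at this
  calc -α * (-s + (s - c * h θ)) + (-‖gJ‖ ^ 2 + (s - c * h θ) / ‖g‖ ^ 2 * s)
      = -α * (-s + (s - c * h θ))
        + (-‖gJ‖ ^ 2 * ‖g‖ ^ 2 + (s - c * h θ) * s) / ‖g‖ ^ 2 := by
        field_simp
    _ ≤ 0 := this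
end

section
/- (Case B: angle condition, equations (20)–(21).) Let ρ < 0, L > 0 and f* ∈ [0, 1). Let θ ∈ ℝⁿ satisfy ρ ≤ h(θ) ≤ 0, ∇h(θ) ≠ 0 with ‖∇h(θ)‖ ≥ L, ∇J(θ) ≠ 0, ∇J(θ)ᵀ∇h(θ) ≤ f*·‖∇J(θ)‖·‖∇h(θ)‖, and ∇J(θ)ᵀ∇h(θ) − c·h(θ) ≥ 0. Then for every α ≥ 0: −α·∇h(θ)ᵀF(θ) + ∇J(θ)ᵀF(θ) ≤ −α·c·|h(θ)| + (c·|ρ|/L)·‖∇J(θ)‖ − (1 − f*²)·‖∇J(θ)‖². In particular, if ‖∇J(θ)‖ > c·|ρ|/(L·(1 − f*²)), then −α·∇h(θ)ᵀF(θ) + ∇J(θ)ᵀF(θ) < 0 for every α ≥ 0. -/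
open scoped RealInnerProductSpace
open Set Filter

set_option maxHeartbeats 800000 in
/-- Case B: angle condition, eqs. (20)–(21). -/
theorem stmt10 {n : ℕ} (hn : 1 ≤ n) (J h : EuclideanSpace ℝ (Fin n) → ℝ) (c : ℝ) (hc : 0 < c)
    (hJ : ContDiff ℝ 1 J) (hJ' : LocallyLipschitz (gradient J))
    (hh : ContDiff ℝ 1 h) (hh' : LocallyLipschitz (gradient h))
    (ρ L fs : ℝ) (hρ : ρ < 0) (hL : 0 < L) (hfs0 : 0 ≤ fs) (hfs1 : fs < 1)
    (θ : EuclideanSpace ℝ (Fin n))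
    (hρθ : ρ ≤ h θ) (hneg : h θ ≤ 0)
    (hgrad : gradient h θ ≠ 0) (hgradL : L ≤ ‖gradient h θ‖)
    (hgradJ : gradient J θ ≠ 0)
    (hangle : ⟪gradient J θ, gradient h θ⟫ ≤ fs * (‖gradient J θ‖ * ‖gradient h θ‖))
    (hact : 0 ≤ ⟪gradient J θ, gradient h θ⟫ - c * h θ) :
    (∀ α : ℝ, 0 ≤ α →
      -α * ⟪gradient h θ, Fvec J h c θ⟫ + ⟪gradient J θ, Fvec J h c θ⟫ ≤
        -(α * c * |h θ|) + (c * |ρ| / L) * ‖gradient J θ‖ -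
          (1 - fs ^ 2) * ‖gradient J θ‖ ^ 2) ∧
    (c * |ρ| / (L * (1 - fs ^ 2)) < ‖gradient J θ‖ →
      ∀ α : ℝ, 0 ≤ α →
        -α * ⟪gradient h θ, Fvec J h c θ⟫ + ⟪gradient J θ, Fvec J h c θ⟫ < 0) := by
  set g := gradient h θ with hg
  set v := gradient J θ with hv
  have hgpos : 0 < ‖g‖ := norm_pos_iff.mpr hgrad
  have hvpos : 0 < ‖v‖ := norm_pos_iff.mpr hgradJ
  have hmax : max (⟪v, g⟫ - c * h θ) 0 = ⟪v, g⟫ - c * h θ := max_eq_left hact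
  have hF : Fvec J h c θ = -v + ((⟪v, g⟫ - c * h θ) / ‖g‖ ^ 2) • g := by
    rw [Fvec, if_neg hgrad, ← hg, ← hv, hmax]
  have hgg : ⟪g, g⟫ = ‖g‖ ^ 2 := real_inner_self_eq_norm_sq g
  have hG2 : (‖g‖:ℝ) ^ 2 ≠ 0 := by positivity
  have h1 : ⟪g, Fvec J h c θ⟫ = -(c * h θ) := by
    rw [hF, inner_add_right, inner_neg_right, real_inner_smul_right, hgg,
      real_inner_comm]
    field_simp
    ring
  have h2 : ⟪v, Fvec J h c θ⟫ =
      -‖v‖ ^ 2 + (⟪v, g⟫ - c * h θ) * ⟪v, g⟫ / ‖g‖ ^ 2 := by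
    rw [hF, inner_add_right, inner_neg_right, real_inner_smul_right,
      real_inner_self_eq_norm_sq]
    ring
  have habs : |h θ| = -(h θ) := abs_of_nonpos hneg
  have habsρ : |ρ| = -ρ := abs_of_nonpos hρ.le
  have key : (⟪v, g⟫ - c * h θ) * ⟪v, g⟫ / ‖g‖ ^ 2 ≤
      (c * |ρ| / L) * ‖v‖ + fs ^ 2 * ‖v‖ ^ 2 := by
    rcases le_or_gt 0 ⟪v, g⟫ with ha | ha
    · set t := ⟪v, g⟫ / ‖g‖ with ht
      have ht0 : 0 ≤ t := div_nonneg ha hgpos.le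
      have htle : t ≤ fs * ‖v‖ := by
        rw [ht, div_le_iff₀ hgpos]
        nlinarith [hangle]
      have heq : (⟪v, g⟫ - c * h θ) * ⟪v, g⟫ / ‖g‖ ^ 2 =
          t ^ 2 + (-(c * h θ) / ‖g‖) * t := by
        rw [ht]; field_simp; ring
      rw [heq, habsρ]
      have hch0 : 0 ≤ -(c * h θ) := by nlinarith
      have hc1 : (0:ℝ) ≤ c * -ρ := mul_nonneg hc.le (by linarith)
      have hc2 : -(c * h θ) ≤ c * -ρ := by nlinarith [mul_le_mul_of_nonneg_left hρθ hc.le]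
      have hdiv : -(c * h θ) / ‖g‖ ≤ c * -ρ / L := div_le_div₀ hc1 hc2 hL hgradL
      have htV : t ≤ ‖v‖ := le_trans htle (by nlinarith)
      have h3 : (-(c * h θ) / ‖g‖) * t ≤ (c * -ρ / L) * ‖v‖ :=
        mul_le_mul hdiv htV ht0 (by positivity)
      nlinarith [sq_nonneg t]
    · have : (⟪v, g⟫ - c * h θ) * ⟪v, g⟫ ≤ 0 := mul_nonpos_of_nonneg_of_nonpos hact ha.le
      have h4 : (⟪v, g⟫ - c * h θ) * ⟪v, g⟫ / ‖g‖ ^ 2 ≤ 0 :=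
        div_nonpos_of_nonpos_of_nonneg this (by positivity)
      have h5 : (0:ℝ) ≤ (c * |ρ| / L) * ‖v‖ + fs ^ 2 * ‖v‖ ^ 2 := by positivity
      linarith
  have main : ∀ α : ℝ, 0 ≤ α →
      -α * ⟪g, Fvec J h c θ⟫ + ⟪v, Fvec J h c θ⟫ ≤
        -(α * c * |h θ|) + (c * |ρ| / L) * ‖v‖ - (1 - fs ^ 2) * ‖v‖ ^ 2 := by
    intro α hα
    rw [h1, h2, habs]
    nlinarith [key]
  refine ⟨main, fun hbig α hα => ?_⟩
  have hfs2 : 0 < 1 - fs ^ 2 := by nlinarith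
  have hlt : (c * |ρ| / L) * ‖v‖ - (1 - fs ^ 2) * ‖v‖ ^ 2 < 0 := by
    have : c * |ρ| / L < (1 - fs ^ 2) * ‖v‖ := by
      rw [div_lt_iff₀ (by positivity : 0 < L * (1 - fs ^ 2))] at hbig
      rw [div_lt_iff₀ hL]
      nlinarith
    nlinarith
  have := main α hα
  have hα' : 0 ≤ α * c * |h θ| := by positivity
  linarith
end

section
/- (Lemma 4: Additive disturbance.) Suppose (A1) and (A2) hold. Then for every compact set Ω ⊂ ℝⁿ there exist M⁺ > 0, ε* > 0 and K > 0 such that for every ε ∈ (0, ε*], every disturbance w = (w₁, w₂, w₃) ∈ ℝⁿ × ℝⁿ × ℝ with ‖w‖ ≤ ε, and every θ ∈ Ω: ‖F₀(∇J(θ) + w₁, ∇h(θ) + w₂, h(θ) + w₃) − F(θ)‖ ≤ K·ε, where F₀(g, p, η) = −g + min{‖p‖⁻², M⁺}·max{gᵀp − c·η, 0}·p (with the convention min{‖p‖⁻², M⁺} = M⁺ when p = 0). -/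
open scoped RealInnerProductSpace
open Set Filter

open Classical in
/-- The estimator-based vector field
`F₀(g, p, η) = −g + min{‖p‖⁻², M⁺}·max{gᵀp − c·η, 0}·p`,
with the convention that the `min` equals `M⁺` when `p = 0`. -/
noncomputable def F0 {n : ℕ} (c Mp : ℝ) (g p : EuclideanSpace ℝ (Fin n)) (η : ℝ) :
    EuclideanSpace ℝ (Fin n) :=
  -g + ((if p = 0 then Mp else min (‖p‖ ^ 2)⁻¹ Mp) * max (⟪g, p⟫ - c * η) 0) • p

private lemma norm_add4_le {E : Type*} [SeminormedAddCommGroup E] (a b c d : E) :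
    ‖a + b + c + d‖ ≤ ‖a‖ + ‖b‖ + ‖c‖ + ‖d‖ := by
  have h1 := norm_add_le (a + b + c) d
  have h2 := norm_add₃_le (a := a) (b := b) (c := c)
  linarith

set_option maxHeartbeats 1000000 in
open Classical in
lemma stmt15_aux {n : ℕ} (c μ R Mp : ℝ) (hc : 0 < c) (hμ : 0 < μ) (hR : 1 ≤ R)
    (hMp : Mp = (μ ^ 2)⁻¹)
    (G P g p : EuclideanSpace ℝ (Fin n)) (H η : ℝ) (Fv : EuclideanSpace ℝ (Fin n))
    (ε : ℝ) (hε0 : 0 < ε) (hεμ : ε ≤ μ) (hε1 : ε ≤ 1)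
    (hG : ‖G‖ ≤ R) (hP : ‖P‖ ≤ R) (hH : |H| ≤ R)
    (hg : ‖g - G‖ ≤ ε) (hp : ‖p - P‖ ≤ ε) (hη : |η - H| ≤ ε)
    (hL : 0 < ⟪G, P⟫ - c * H → 2 * μ ≤ ‖P‖)
    (hFv1 : ⟪G, P⟫ - c * H ≤ 0 → Fv = -G)
    (hFv2 : 0 < ⟪G, P⟫ - c * H → Fv = -G + ((⟪G, P⟫ - c * H) / ‖P‖ ^ 2) • P) :
    ‖F0 c Mp g p η - Fv‖ ≤
      (1 + (2*R+1+c)/μ + (2*R+1+c)/μ + (R^2+c*R)*(2*R+1)*(R+1)/(4*μ^4) + (R^2+c*R)/(4*μ^2)) * ε := by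
  have hC1 : (0:ℝ) < 2*R+1+c := by linarith
  have hC2 : (0:ℝ) < R^2+c*R := by nlinarith
  -- difference of the two "alpha" quantities
  have hexp : (⟪g, p⟫ - c * η) - (⟪G, P⟫ - c * H)
      = ⟪G, p - P⟫ + ⟪g - G, P⟫ + ⟪g - G, p - P⟫ - c * (η - H) := by
    have h1 : ⟪g, p⟫ = ⟪G + (g - G), P + (p - P)⟫ := by
      rw [show G + (g - G) = g by abel, show P + (p - P) = p by abel]
    rw [h1, inner_add_left, inner_add_right, inner_add_right]; ring
  have hd : |(⟪g, p⟫ - c * η) - (⟪G, P⟫ - c * H)| ≤ (2*R+1+c) * ε := by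
    rw [hexp]
    have i1 := abs_le.mp ((abs_real_inner_le_norm G (p - P)).trans
      (mul_le_mul hG hp (norm_nonneg _) (by linarith)))
    have i2 := abs_le.mp ((abs_real_inner_le_norm (g - G) P).trans
      (mul_le_mul hg hP (norm_nonneg _) hε0.le))
    have i3 := abs_le.mp ((abs_real_inner_le_norm (g - G) (p - P)).trans
      (mul_le_mul hg hp (norm_nonneg _) hε0.le))
    have i4 := abs_le.mp hη
    rw [abs_le]
    constructor <;> nlinarith [i1.1, i1.2, i2.1, i2.2, i3.1, i3.2, i4.1, i4.2]
  have hm := (abs_max_sub_max_le_abs (⟪g, p⟫ - c * η) (⟪G, P⟫ - c * H) 0).trans hd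
  -- basic nonnegativity facts for the final combination
  have hT2 : (0:ℝ) ≤ (R^2+c*R)*(2*R+1)*(R+1)/(4*μ^4) := by
    apply div_nonneg (by nlinarith) (by positivity)
  have hT3 : (0:ℝ) ≤ (R^2+c*R)/(4*μ^2) := div_nonneg hC2.le (by positivity)
  have hT1 : (0:ℝ) ≤ (2*R+1+c)/μ := div_nonneg hC1.le hμ.le
  rcases le_or_gt (⟪G, P⟫ - c * H) 0 with hA | hB
  · -- inactive case: Fv = -G
    rw [hFv1 hA]
    simp only [F0]
    set t := (if p = 0 then Mp else min (‖p‖ ^ 2)⁻¹ Mp) with ht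
    have ht0 : 0 ≤ t := by
      rw [ht]; split_ifs with h0
      · rw [hMp]; positivity
      · exact le_min (by positivity) (by rw [hMp]; positivity)
    have htp : t * ‖p‖ ≤ μ⁻¹ := by
      rcases eq_or_ne p 0 with h0 | h0
      · rw [ht, if_pos h0, h0, norm_zero, mul_zero]; positivity
      · rw [ht, if_neg h0]
        rcases le_or_gt ‖p‖ μ with hle | hlt
        · have h1 : min (‖p‖ ^ 2)⁻¹ Mp * ‖p‖ ≤ Mp * μ :=
            mul_le_mul (min_le_right _ _) hle (norm_nonneg _) (by rw [hMp]; positivity)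
          have h2 : Mp * μ = μ⁻¹ := by
            rw [hMp, pow_two, mul_inv, mul_assoc, inv_mul_cancel₀ hμ.ne', mul_one]
          rw [h2] at h1; exact h1
        · have hpn : (0:ℝ) < ‖p‖ := hμ.trans hlt
          have h1 : min (‖p‖ ^ 2)⁻¹ Mp * ‖p‖ ≤ (‖p‖ ^ 2)⁻¹ * ‖p‖ :=
            mul_le_mul_of_nonneg_right (min_le_left _ _) (norm_nonneg _)
          have h2 : (‖p‖ ^ 2)⁻¹ * ‖p‖ = ‖p‖⁻¹ := by
            rw [pow_two, mul_inv, mul_assoc, inv_mul_cancel₀ hpn.ne', mul_one]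
          have h3 : ‖p‖⁻¹ ≤ μ⁻¹ := inv_anti₀ hμ hlt.le
          rw [h2] at h1; linarith
    have hmw : max (⟪g, p⟫ - c * η) 0 ≤ (2*R+1+c) * ε := by
      rw [max_eq_right hA, sub_zero] at hm
      exact (le_abs_self _).trans hm
    have hmw0 : 0 ≤ max (⟪g, p⟫ - c * η) 0 := le_max_right _ _
    have hre : -g + (t * max (⟪g, p⟫ - c * η) 0) • p - -G
        = -(g - G) + (t * max (⟪g, p⟫ - c * η) 0) • p := by abel
    rw [hre]
    calc ‖-(g - G) + (t * max (⟪g, p⟫ - c * η) 0) • p‖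
        ≤ ‖-(g - G)‖ + ‖(t * max (⟪g, p⟫ - c * η) 0) • p‖ := norm_add_le _ _
      _ = ‖g - G‖ + (t * max (⟪g, p⟫ - c * η) 0) * ‖p‖ := by
          rw [norm_neg, norm_smul, Real.norm_of_nonneg (mul_nonneg ht0 hmw0)]
      _ ≤ ε + μ⁻¹ * ((2*R+1+c) * ε) := by
          have h1 : (t * max (⟪g, p⟫ - c * η) 0) * ‖p‖ = (t * ‖p‖) * max (⟪g, p⟫ - c * η) 0 := by ring
          rw [h1]
          have h2 : (t * ‖p‖) * max (⟪g, p⟫ - c * η) 0 ≤ μ⁻¹ * ((2*R+1+c) * ε) :=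
            mul_le_mul htp hmw hmw0 (by positivity)
          linarith [hg]
      _ ≤ _ := by
          have : μ⁻¹ * ((2*R+1+c) * ε) = ((2*R+1+c)/μ) * ε := by ring
          rw [this]
          nlinarith [mul_nonneg hT1 hε0.le, mul_nonneg hT2 hε0.le, mul_nonneg hT3 hε0.le]
  · -- active case
    have hS : 2 * μ ≤ ‖P‖ := hL hB
    have hnp : μ ≤ ‖p‖ := by
      have := norm_sub_norm_le P p
      rw [norm_sub_rev p P] at hp
      linarith
    have hp0 : p ≠ 0 := by
      intro h0; rw [h0, norm_zero] at hnp; linarith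
    have hP0 : (0:ℝ) < ‖P‖ := by linarith
    rw [hFv2 hB]
    simp only [F0, if_neg hp0]
    have hmin : min (‖p‖ ^ 2)⁻¹ Mp = (‖p‖ ^ 2)⁻¹ := by
      apply min_eq_left
      rw [hMp]
      exact inv_anti₀ (by positivity) (pow_le_pow_left₀ hμ.le hnp 2)
    rw [hmin]
    set mw := max (⟪g, p⟫ - c * η) 0 with hmwdef
    set A := ⟪G, P⟫ - c * H with hAdef
    have hmA : |mw - A| ≤ (2*R+1+c) * ε := by
      rw [hmwdef, hAdef]
      rw [max_eq_left hB.le] at hm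
      exact hm
    have hAabs : |A| ≤ R^2 + c*R := by
      have i1 := abs_le.mp (abs_real_inner_le_norm G P |>.trans
        (mul_le_mul hG hP (norm_nonneg _) (by linarith)))
      have i2 := abs_le.mp hH
      rw [hAdef, abs_le]
      constructor <;> nlinarith [i1.1, i1.2, i2.1, i2.2]
    have hA0 : 0 ≤ A := hB.le
    have hdec : -g + ((‖p‖ ^ 2)⁻¹ * mw) • p - (-G + (A / ‖P‖ ^ 2) • P)
        = -(g - G) + ((mw - A) / ‖p‖ ^ 2) • p + (A / ‖p‖ ^ 2 - A / ‖P‖ ^ 2) • p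
          + (A / ‖P‖ ^ 2) • (p - P) := by module
    rw [hdec]
    have hpn : (0:ℝ) < ‖p‖ := by linarith
    have hpR : ‖p‖ ≤ R + 1 := by
      have := norm_sub_norm_le p P
      linarith
    -- term 1
    have hB1 : ‖((mw - A) / ‖p‖ ^ 2) • p‖ ≤ (2*R+1+c)/μ * ε := by
      rw [norm_smul, Real.norm_eq_abs, abs_div, abs_of_nonneg (show (0:ℝ) ≤ ‖p‖^2 by positivity)]
      have h1 : |mw - A| / ‖p‖ ^ 2 * ‖p‖ = |mw - A| / ‖p‖ := by
        field_simp [hpn.ne']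
      rw [h1]
      calc |mw - A| / ‖p‖ ≤ ((2*R+1+c) * ε) / μ :=
          div_le_div₀ (by positivity) hmA hμ hnp
        _ = (2*R+1+c)/μ * ε := by ring
    -- term 2
    have hdiff : |‖P‖ ^ 2 - ‖p‖ ^ 2| ≤ ε * (2*R+1) := by
      rw [show ‖P‖^2 - ‖p‖^2 = (‖P‖ - ‖p‖) * (‖P‖ + ‖p‖) by ring, abs_mul,
        abs_of_nonneg (show (0:ℝ) ≤ ‖P‖ + ‖p‖ by positivity)]
      have h1 : |‖P‖ - ‖p‖| ≤ ε := by
        have := abs_norm_sub_norm_le P p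
        rw [norm_sub_rev p P] at hp
        linarith
      exact mul_le_mul h1 (by linarith) (by positivity) hε0.le
    have hB2 : ‖(A / ‖p‖ ^ 2 - A / ‖P‖ ^ 2) • p‖ ≤ (R^2+c*R)*(2*R+1)*(R+1)/(4*μ^4) * ε := by
      rw [norm_smul, Real.norm_eq_abs]
      have hsub : A / ‖p‖ ^ 2 - A / ‖P‖ ^ 2 = A * (‖P‖ ^ 2 - ‖p‖ ^ 2) / (‖p‖ ^ 2 * ‖P‖ ^ 2) := by
        field_simp
      rw [hsub, abs_div, abs_mul,
        abs_of_nonneg (show (0:ℝ) ≤ ‖p‖^2 * ‖P‖^2 by positivity)]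
      have hden : 4 * μ^4 ≤ ‖p‖ ^ 2 * ‖P‖ ^ 2 := by
        have e1 : μ^2 ≤ ‖p‖^2 := pow_le_pow_left₀ hμ.le hnp 2
        have e2 : (2*μ)^2 ≤ ‖P‖^2 := pow_le_pow_left₀ (by positivity) hS 2
        have e3 := mul_le_mul e1 e2 (by positivity) (by positivity : (0:ℝ) ≤ ‖p‖^2)
        nlinarith [e3]
      have hnum : |A| * |‖P‖ ^ 2 - ‖p‖ ^ 2| ≤ (R^2+c*R) * (ε * (2*R+1)) :=
        mul_le_mul hAabs hdiff (abs_nonneg _) hC2.le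
      calc |A| * |‖P‖ ^ 2 - ‖p‖ ^ 2| / (‖p‖ ^ 2 * ‖P‖ ^ 2) * ‖p‖
          ≤ ((R^2+c*R) * (ε * (2*R+1))) / (4 * μ^4) * (R + 1) := by
            apply mul_le_mul _ hpR hpn.le (by positivity)
            exact div_le_div₀ (by positivity) hnum (by positivity) hden
        _ = (R^2+c*R)*(2*R+1)*(R+1)/(4*μ^4) * ε := by ring
    -- term 3
    have hB3 : ‖(A / ‖P‖ ^ 2) • (p - P)‖ ≤ (R^2+c*R)/(4*μ^2) * ε := by
      rw [norm_smul, Real.norm_eq_abs, abs_div,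
        abs_of_nonneg (show (0:ℝ) ≤ ‖P‖^2 by positivity)]
      have hden : 4 * μ^2 ≤ ‖P‖ ^ 2 := by
        have e2 : (2*μ)^2 ≤ ‖P‖^2 := pow_le_pow_left₀ (by positivity) hS 2
        linarith [e2]
      calc |A| / ‖P‖ ^ 2 * ‖p - P‖ ≤ (R^2+c*R) / (4*μ^2) * ε := by
            apply mul_le_mul _ hp (norm_nonneg _) (by positivity)
            exact div_le_div₀ hC2.le hAabs (by positivity) hden
        _ = (R^2+c*R)/(4*μ^2) * ε := by ring
    calc ‖-(g - G) + ((mw - A) / ‖p‖ ^ 2) • p + (A / ‖p‖ ^ 2 - A / ‖P‖ ^ 2) • p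
          + (A / ‖P‖ ^ 2) • (p - P)‖
        ≤ ‖-(g - G)‖ + ‖((mw - A) / ‖p‖ ^ 2) • p‖ + ‖(A / ‖p‖ ^ 2 - A / ‖P‖ ^ 2) • p‖
          + ‖(A / ‖P‖ ^ 2) • (p - P)‖ := norm_add4_le _ _ _ _
      _ ≤ ε + (2*R+1+c)/μ * ε + (R^2+c*R)*(2*R+1)*(R+1)/(4*μ^4) * ε
          + (R^2+c*R)/(4*μ^2) * ε := by
          rw [norm_neg]
          gcongr <;> first | exact hg | exact hB1 | exact hB2 | exact hB3
      _ ≤ _ := by nlinarith [mul_nonneg hT1 hε0.le]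

/-- Lemma 4: additive disturbance: under (A1)–(A2), on any compact set Ω
there exist M⁺, ε*, K > 0 such that for all disturbances of size at most ε ≤ ε*, the
disturbed dynamics equal the exact dynamics up to an O(ε) error. -/
theorem stmt15 {n : ℕ} (hn : 1 ≤ n) (J h : EuclideanSpace ℝ (Fin n) → ℝ) (c : ℝ)
    (hc : 0 < c) (θc : EuclideanSpace ℝ (Fin n))
    (hJ : ContDiff ℝ 1 J) (hJ' : LocallyLipschitz (gradient J))
    (hh : ContDiff ℝ 1 h) (hh' : LocallyLipschitz (gradient h))
    (hA1 : 0 ≤ h θc ∧ (∀ θ, 0 ≤ h θ → θ ≠ θc → J θc < J θ) ∧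
      (∀ θ, 0 ≤ h θ → gradient J θ = 0 → θ = θc))
    (hA2 : (∃ θ, 0 ≤ h θ) ∧ ∀ ρ ∈ Set.range h, ρ ≤ 0 →
      ∃ L > 0, ∀ θ, h θ ≤ 0 → ρ ≤ h θ → L < ‖gradient h θ‖) :
    ∀ Ω : Set (EuclideanSpace ℝ (Fin n)), IsCompact Ω →
      ∃ Mp > (0:ℝ), ∃ εs > (0:ℝ), ∃ K > (0:ℝ), ∀ ε ∈ Set.Ioc (0:ℝ) εs,
        ∀ w : EuclideanSpace ℝ (Fin n) × EuclideanSpace ℝ (Fin n) × ℝ, ‖w‖ ≤ ε →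
          ∀ θ ∈ Ω,
            ‖F0 c Mp (gradient J θ + w.1) (gradient h θ + w.2.1) (h θ + w.2.2) -
              Fvec J h c θ‖ ≤ K * ε := by
  intro Ω hΩ
  have hGc : Continuous (gradient J) := hJ'.continuous
  have hPc : Continuous (gradient h) := hh'.continuous
  have hhc : Continuous h := hh.continuous
  -- where the gradient of h vanishes, h is positive
  have hPpos : ∀ θ, gradient h θ = 0 → 0 < h θ := by
    intro θ hP0
    by_contra hle
    push_neg at hle
    obtain ⟨L, hL, hall⟩ := hA2.2 (h θ) ⟨θ, rfl⟩ hle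
    have := hall θ hle le_rfl
    rw [hP0, norm_zero] at this
    linarith
  -- uniform bounds on the compact set
  obtain ⟨R0, hR0⟩ := hΩ.exists_bound_of_continuousOn
    (Continuous.continuousOn (f := fun θ => (gradient J θ, gradient h θ, h θ))
      (hGc.prodMk (hPc.prodMk hhc)))
  set R := max R0 1 with hRdef
  have hR1 : (1:ℝ) ≤ R := le_max_right _ _
  have hRG : ∀ θ ∈ Ω, ‖gradient J θ‖ ≤ R := fun θ hθ =>
    ((norm_fst_le (gradient J θ, gradient h θ, h θ)).trans (hR0 θ hθ)).trans (le_max_left _ _)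
  have hRP : ∀ θ ∈ Ω, ‖gradient h θ‖ ≤ R := fun θ hθ =>
    (((norm_fst_le (gradient h θ, h θ)).trans
      (norm_snd_le (gradient J θ, gradient h θ, h θ))).trans (hR0 θ hθ)).trans (le_max_left _ _)
  have hRh : ∀ θ ∈ Ω, |h θ| ≤ R := by
    intro θ hθ
    have h1 : ‖h θ‖ ≤ R0 := ((norm_snd_le (gradient h θ, h θ)).trans
      (norm_snd_le (gradient J θ, gradient h θ, h θ))).trans (hR0 θ hθ)
    have h2 : R0 ≤ R := le_max_left _ _
    rw [Real.norm_eq_abs] at h1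
    linarith
  -- uniform lower bound on ‖∇h‖ on the "active" region
  have hαc : Continuous fun θ => ⟪gradient J θ, gradient h θ⟫ - c * h θ :=
    (hGc.inner hPc).sub (continuous_const.mul hhc)
  obtain ⟨L₀, hL₀pos, hL₀⟩ :
      ∃ L₀ > (0:ℝ), ∀ θ ∈ Ω, 0 ≤ ⟪gradient J θ, gradient h θ⟫ - c * h θ →
        L₀ ≤ ‖gradient h θ‖ := by
    have hWc : IsCompact (Ω ∩ {θ | 0 ≤ ⟪gradient J θ, gradient h θ⟫ - c * h θ}) :=
      hΩ.inter_right (isClosed_le continuous_const hαc)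
    rcases (Ω ∩ {θ | 0 ≤ ⟪gradient J θ, gradient h θ⟫ - c * h θ}).eq_empty_or_nonempty with
      hW | hW
    · refine ⟨1, one_pos, fun θ hθ hα' => ?_⟩
      have hmem : θ ∈ Ω ∩ {θ | 0 ≤ ⟪gradient J θ, gradient h θ⟫ - c * h θ} := ⟨hθ, hα'⟩
      rw [hW] at hmem
      exact hmem.elim
    · obtain ⟨θ₀, hθ₀W, hmin⟩ := hWc.exists_isMinOn hW
        (continuous_norm.comp hPc).continuousOn
      refine ⟨‖gradient h θ₀‖, ?_, fun θ hθ hα' => hmin ⟨hθ, hα'⟩⟩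
      rcases eq_or_ne (gradient h θ₀) 0 with h0 | h0
      · exfalso
        have h1 := hPpos θ₀ h0
        have h2 := hθ₀W.2
        rw [Set.mem_setOf_eq, h0, inner_zero_right] at h2
        nlinarith
      · exact norm_pos_iff.mpr h0
  set μ := L₀ / 2 with hμdef
  have hμ : (0:ℝ) < μ := by positivity
  refine ⟨(μ ^ 2)⁻¹, by positivity, min μ 1, lt_min hμ one_pos,
    1 + (2*R+1+c)/μ + (2*R+1+c)/μ + (R^2+c*R)*(2*R+1)*(R+1)/(4*μ^4) + (R^2+c*R)/(4*μ^2),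
    ?_, ?_⟩
  · have hC1 : (0:ℝ) < 2*R+1+c := by linarith
    have hC2 : (0:ℝ) < R^2+c*R := by nlinarith
    have t1 : (0:ℝ) ≤ (2*R+1+c)/μ := div_nonneg hC1.le hμ.le
    have t2 : (0:ℝ) ≤ (R^2+c*R)*(2*R+1)*(R+1)/(4*μ^4) := div_nonneg (by nlinarith) (by positivity)
    have t3 : (0:ℝ) ≤ (R^2+c*R)/(4*μ^2) := div_nonneg hC2.le (by positivity)
    linarith
  · rintro ε ⟨hε0, hεs⟩ w hw θ hθ
    have hεμ : ε ≤ μ := hεs.trans (min_le_left _ _)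
    have hε1 : ε ≤ 1 := hεs.trans (min_le_right _ _)
    have hw1 : ‖w.1‖ ≤ ε := (norm_fst_le w).trans hw
    have hw2 : ‖w.2.1‖ ≤ ε := ((norm_fst_le w.2).trans (norm_snd_le w)).trans hw
    have hw3 : |w.2.2| ≤ ε := by
      have := ((norm_snd_le w.2).trans (norm_snd_le w)).trans hw
      simpa using this
    apply stmt15_aux c μ R ((μ ^ 2)⁻¹) hc hμ hR1 rfl (gradient J θ) (gradient h θ) _ _ (h θ) _
      (Fvec J h c θ) ε hε0 hεμ hε1 (hRG θ hθ) (hRP θ hθ) (hRh θ hθ)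
    · simpa using hw1
    · simpa using hw2
    · simpa using hw3
    · intro hB
      have := hL₀ θ hθ hB.le
      rw [hμdef]; linarith
    · intro hA
      rw [Fvec]
      split_ifs with h0
      · rfl
      · rw [max_eq_right hA, zero_div, zero_smul, add_zero]
    · intro hB
      have h0 : gradient h θ ≠ 0 := by
        intro h0
        have h1 := hPpos θ h0
        rw [h0, inner_zero_right] at hB
        nlinarith
      rw [Fvec, if_neg h0, max_eq_left hB.le]
end
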